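/- Let d, L_σ, W_σ ∈ ℕ with L_σ ≥ 1 and let R_σ ≥ 1. Let σ_κ, σ_{κ̃} : ℝ^d → ℝ^d be two vector fields whose d components are realizations of tanh neural networks with a common architecture of depth L_σ and width at most W_σ, with parameter vectors κ, κ̃ each bounded by R_σ in the ℓ∞ norm. Let Γ ⊆ { x ∈ ℝ^d : ‖x‖_{ℓ∞} ≤ 1 }, let q : Γ → ℝ satisfy |q(x)| ≤ c_1 for all x ∈ Γ with c_1 > 0, and let z be a differentiable function on a neighborhood of Γ with ‖∇z(x)‖_{ℓ2} ≤ c_z' for all x ∈ Γ. Then for every x ∈ Γ, | ‖σ_κ(x) − q(x) ∇z(x)‖_{ℓ2}² − ‖σ_{κ̃}(x) − q(x) ∇z(x)‖_{ℓ2}² | ≤ Λ_{b'} ‖κ − κ̃‖_{ℓ∞}, where Λ_{b'} = 4 ( √d R_σ (W_σ + 1) + c_1 c_z' ) · √d L_σ R_σ^{L_σ − 1} W_σ^{L_σ}. -/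

import Mathlib

noncomputable def nnHidden (dims : ℕ → ℕ)
    (A : ∀ ℓ : ℕ, Matrix (Fin (dims (ℓ + 1))) (Fin (dims ℓ)) ℝ)
    (b : ∀ ℓ : ℕ, Fin (dims (ℓ + 1)) → ℝ)
    (x : Fin (dims 0) → ℝ) : (ℓ : ℕ) → Fin (dims ℓ) → ℝ
  | 0 => x
  | ℓ + 1 => fun i => Real.tanh ((∑ j, A ℓ i j * nnHidden dims A b x ℓ j) + b ℓ i)

noncomputable def nnRealize (dims : ℕ → ℕ) (L : ℕ)
    (A : ∀ ℓ : ℕ, Matrix (Fin (dims (ℓ + 1))) (Fin (dims ℓ)) ℝ)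
    (b : ∀ ℓ : ℕ, Fin (dims (ℓ + 1)) → ℝ)
    (x : Fin (dims 0) → ℝ) : Fin (dims L) → ℝ :=
  match L with
  | 0 => x
  | m + 1 => fun i => (∑ j, A m i j * nnHidden dims A b x m j) + b m i

private lemma tanh_hasDerivAt (x : ℝ) :
    HasDerivAt Real.tanh (1 / Real.cosh x ^ 2) x := by
  have h := (Real.hasDerivAt_sinh x).div (Real.hasDerivAt_cosh x) (ne_of_gt (Real.cosh_pos x))
  have he : Real.tanh = fun y => Real.sinh y / Real.cosh y :=
    funext fun y => Real.tanh_eq_sinh_div_cosh y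
  rw [he]
  refine h.congr_deriv ?_
  rw [← Real.cosh_sq_sub_sinh_sq x]; ring

private lemma tanh_lip (a c : ℝ) : |Real.tanh a - Real.tanh c| ≤ |a - c| := by
  have hdiff : ∀ y ∈ (Set.univ : Set ℝ), DifferentiableAt ℝ Real.tanh y :=
    fun y _ => (tanh_hasDerivAt y).differentiableAt
  have hbound : ∀ y ∈ (Set.univ : Set ℝ), ‖deriv Real.tanh y‖ ≤ (1 : ℝ) := by
    intro y _
    rw [(tanh_hasDerivAt y).deriv, Real.norm_eq_abs, abs_of_nonneg (by positivity),
      div_le_one (by positivity)]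
    nlinarith [Real.one_le_cosh y]
  have := convex_univ.norm_image_sub_le_of_norm_deriv_le hdiff hbound
    (Set.mem_univ c) (Set.mem_univ a)
  simpa using this

private lemma tanh_abs_le (x : ℝ) : |Real.tanh x| ≤ 1 := by
  have hc := Real.cosh_pos x
  rw [Real.tanh_eq_sinh_div_cosh, abs_div, abs_of_pos hc, div_le_one hc]
  have h1 := Real.sinh_lt_cosh x
  have h2 := Real.sinh_lt_cosh (-x)
  rw [Real.sinh_neg, Real.cosh_neg] at h2
  rcases abs_cases (Real.sinh x) with ⟨h, _⟩ | ⟨h, _⟩ <;> rw [h] <;> linarith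
private lemma nn_step_bound (Wσ Rσ εκ D : ℝ) (k : ℕ)
    (hW1 : 1 ≤ Wσ) (hR : 1 ≤ Rσ) (hεκ : 0 ≤ εκ) (hD0 : 0 ≤ D)
    (hD : D ≤ (k : ℝ) * (Wσ + 1) * (Rσ * Wσ) ^ (k - 1) * εκ) :
    Wσ * (εκ + Rσ * D) + εκ ≤ ((k : ℝ) + 1) * (Wσ + 1) * (Rσ * Wσ) ^ k * εκ := by
  have hR0 : (0 : ℝ) ≤ Rσ := by linarith
  have hW0 : (0 : ℝ) ≤ Wσ := by linarith
  have hRW1 : (1 : ℝ) ≤ Rσ * Wσ := le_trans hR (le_mul_of_one_le_right hR0 hW1)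
  have hP : (1 : ℝ) ≤ (Rσ * Wσ) ^ k := one_le_pow₀ hRW1
  rcases Nat.eq_zero_or_pos k with rfl | hk
  · simp only [Nat.cast_zero, zero_mul, pow_zero, zero_add, one_mul] at hD ⊢
    nlinarith [mul_nonneg hW0 hR0]
  · have e5 : (Rσ * Wσ) * (Rσ * Wσ) ^ (k - 1) = (Rσ * Wσ) ^ k := by
      rw [← pow_succ']
      congr 1
      omega
    have h1 : Wσ * (Rσ * D) ≤ Wσ * (Rσ * ((k : ℝ) * (Wσ + 1) * (Rσ * Wσ) ^ (k - 1) * εκ)) :=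
      mul_le_mul_of_nonneg_left (mul_le_mul_of_nonneg_left hD hR0) hW0
    have h2 : Wσ * (Rσ * ((k : ℝ) * (Wσ + 1) * (Rσ * Wσ) ^ (k - 1) * εκ))
        = (k : ℝ) * (Wσ + 1) * ((Rσ * Wσ) * (Rσ * Wσ) ^ (k - 1)) * εκ := by ring
    rw [e5] at h2
    rw [h2] at h1
    have h4 : (Wσ + 1) * εκ ≤ (Wσ + 1) * (Rσ * Wσ) ^ k * εκ := by
      nlinarith [mul_nonneg (mul_nonneg (sub_nonneg.2 hP) (by linarith : (0:ℝ) ≤ Wσ + 1)) hεκ]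
    nlinarith
private lemma nn_step_bound2 (Wσ Rσ εκ : ℝ) (m : ℕ)
    (hW1 : 1 ≤ Wσ) (hR : 1 ≤ Rσ) (hεκ : 0 ≤ εκ) :
    ((m : ℝ) + 1) * (Wσ + 1) * (Rσ * Wσ) ^ m * εκ
      ≤ 2 * ((m : ℝ) + 1) * Rσ ^ m * Wσ ^ (m + 1) * εκ := by
  have h1 : (0 : ℝ) ≤ ((m : ℝ) + 1) * Rσ ^ m * Wσ ^ m * εκ := by positivity
  calc ((m : ℝ) + 1) * (Wσ + 1) * (Rσ * Wσ) ^ m * εκ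
      = (((m : ℝ) + 1) * Rσ ^ m * Wσ ^ m * εκ) * (Wσ + 1) := by rw [mul_pow]; ring
    _ ≤ (((m : ℝ) + 1) * Rσ ^ m * Wσ ^ m * εκ) * (2 * Wσ) :=
        mul_le_mul_of_nonneg_left (by linarith) h1
    _ = 2 * ((m : ℝ) + 1) * Rσ ^ m * Wσ ^ (m + 1) * εκ := by rw [pow_succ]; ring
set_option maxHeartbeats 1000000 in
/-- Lipschitz continuity, with respect to the neural network parameters, of
the Dirichlet boundary integrand `‖σ_κ(x) − q(x) ∇z(x)‖²_{ℓ²}`, with Lipschitz constant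
`Λ_{b'} = 4 (√d R_σ (W_σ+1) + c₁ c_z') · √d L_σ R_σ^{L_σ-1} W_σ^{L_σ}`. -/
theorem dirichlet_boundary_lipschitz (d Lσ Wσ : ℕ) (hL : 1 ≤ Lσ) (Rσ : ℝ) (hR : 1 ≤ Rσ)
    (dims : Fin d → ℕ → ℕ)
    (h0 : ∀ i, dims i 0 = d) (hout : ∀ i, dims i Lσ = 1)
    (hW : ∀ i, ∀ ℓ ≤ Lσ, dims i ℓ ≤ Wσ)
    (A A' : ∀ i : Fin d, ∀ ℓ : ℕ, Matrix (Fin (dims i (ℓ + 1))) (Fin (dims i ℓ)) ℝ)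
    (b b' : ∀ i : Fin d, ∀ ℓ : ℕ, Fin (dims i (ℓ + 1)) → ℝ)
    (hA : ∀ i, ∀ ℓ < Lσ, ∀ p r, |A i ℓ p r| ≤ Rσ)
    (hb : ∀ i, ∀ ℓ < Lσ, ∀ p, |b i ℓ p| ≤ Rσ)
    (hA' : ∀ i, ∀ ℓ < Lσ, ∀ p r, |A' i ℓ p r| ≤ Rσ)
    (hb' : ∀ i, ∀ ℓ < Lσ, ∀ p, |b' i ℓ p| ≤ Rσ)
    (σf σf' : Fin d → (Fin d → ℝ) → ℝ)
    (hσ : ∀ i x, σf i x =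
      nnRealize (dims i) Lσ (A i) (b i) (fun j => x (Fin.cast (h0 i) j))
        ⟨0, lt_of_lt_of_eq Nat.one_pos (hout i).symm⟩)
    (hσ' : ∀ i x, σf' i x =
      nnRealize (dims i) Lσ (A' i) (b' i) (fun j => x (Fin.cast (h0 i) j))
        ⟨0, lt_of_lt_of_eq Nat.one_pos (hout i).symm⟩)
    (εκ : ℝ) (hεκ : 0 ≤ εκ)
    (hdA : ∀ i, ∀ ℓ < Lσ, ∀ p r, |A i ℓ p r - A' i ℓ p r| ≤ εκ)
    (hdb : ∀ i, ∀ ℓ < Lσ, ∀ p, |b i ℓ p - b' i ℓ p| ≤ εκ)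
    (Γ : Set (Fin d → ℝ)) (hΓ : ∀ x ∈ Γ, ∀ j, |x j| ≤ 1)
    (q : (Fin d → ℝ) → ℝ) (c₁ : ℝ) (hc₁ : 0 < c₁) (hq : ∀ x ∈ Γ, |q x| ≤ c₁)
    (z : (Fin d → ℝ) → ℝ) (cz' : ℝ)
    (hz : ∀ x ∈ Γ, DifferentiableAt ℝ z x)
    (hgz : ∀ x ∈ Γ, Real.sqrt (∑ j, (fderiv ℝ z x (Pi.single j 1)) ^ 2) ≤ cz')
    (x : Fin d → ℝ) (hx : x ∈ Γ) :
    |(∑ i, (σf i x - q x * fderiv ℝ z x (Pi.single i 1)) ^ 2) -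
        ∑ i, (σf' i x - q x * fderiv ℝ z x (Pi.single i 1)) ^ 2| ≤
      (4 * (Real.sqrt d * Rσ * ((Wσ : ℝ) + 1) + c₁ * cz') *
          (Real.sqrt d * (Lσ : ℝ) * Rσ ^ (Lσ - 1) * (Wσ : ℝ) ^ Lσ)) * εκ := by
  rcases Nat.eq_zero_or_pos d with hd | hd
  · subst hd
    simp
  obtain ⟨m, rfl⟩ : ∃ m, Lσ = m + 1 := ⟨Lσ - 1, (Nat.succ_pred_eq_of_pos hL).symm⟩
  have hR0 : (0 : ℝ) ≤ Rσ := le_trans zero_le_one hR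
  have hW1 : (1 : ℝ) ≤ (Wσ : ℝ) := by
    have h1 : d ≤ Wσ := (h0 ⟨0, hd⟩) ▸ hW ⟨0, hd⟩ 0 (Nat.zero_le _)
    exact_mod_cast le_trans hd h1
  have hW0 : (0 : ℝ) ≤ (Wσ : ℝ) := le_trans zero_le_one hW1
  set g : Fin d → ℝ := fun i => fderiv ℝ z x (Pi.single i 1) with hg
  set S : ℝ := Rσ * ((Wσ : ℝ) + 1) with hS
  set δ : ℝ := 2 * ((m : ℝ) + 1) * Rσ ^ m * (Wσ : ℝ) ^ (m + 1) * εκ with hδ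
  have hδ0 : 0 ≤ δ := by positivity
  -- per-component bounds
  have key : ∀ i : Fin d,
      |σf i x - σf' i x| ≤ δ ∧ |σf i x| ≤ S ∧ |σf' i x| ≤ S := by
    intro i
    set y : Fin (dims i 0) → ℝ := fun j => x (Fin.cast (h0 i) j) with hy
    set h : (ℓ : ℕ) → Fin (dims i ℓ) → ℝ := nnHidden (dims i) (A i) (b i) y with hh
    set h' : (ℓ : ℕ) → Fin (dims i ℓ) → ℝ := nnHidden (dims i) (A' i) (b' i) y with hh'
    -- hidden state bounds
    have hbd : ∀ ℓ (j : Fin (dims i ℓ)), |h ℓ j| ≤ 1 ∧ |h' ℓ j| ≤ 1 := by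
      intro ℓ j
      cases ℓ with
      | zero =>
        constructor <;> · simp only [hh, hh', nnHidden]; exact hΓ x hx _
      | succ k =>
        constructor <;> · simp only [hh, hh', nnHidden]; exact tanh_abs_le _
    -- hidden state difference bound
    have hdiff : ∀ ℓ, ℓ ≤ m + 1 → ∀ j : Fin (dims i ℓ),
        |h ℓ j - h' ℓ j| ≤ (ℓ : ℝ) * ((Wσ : ℝ) + 1) * (Rσ * (Wσ : ℝ)) ^ (ℓ - 1) * εκ := by
      intro ℓ
      induction ℓ with
      | zero => intro _ j; simp [hh, hh', nnHidden]
      | succ k ih =>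
        intro hk j
        have hkm : k < m + 1 := hk
        have hdims : (dims i k : ℝ) ≤ (Wσ : ℝ) := by exact_mod_cast hW i k (le_of_lt hkm)
        set D : ℝ := (k : ℝ) * ((Wσ : ℝ) + 1) * (Rσ * (Wσ : ℝ)) ^ (k - 1) * εκ with hD
        have hD0 : 0 ≤ D := by positivity
        have hterm : ∀ r : Fin (dims i k),
            |A i k j r * h k r - A' i k j r * h' k r| ≤ εκ + Rσ * D := by
          intro r
          have e1 : A i k j r * h k r - A' i k j r * h' k r
              = (A i k j r - A' i k j r) * h k r + A' i k j r * (h k r - h' k r) := by ring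
          rw [e1]
          refine le_trans (abs_add_le _ _) ?_
          rw [abs_mul, abs_mul]
          have t1 : |A i k j r - A' i k j r| * |h k r| ≤ εκ * 1 :=
            mul_le_mul (hdA i k hkm j r) (hbd k r).1 (abs_nonneg _) hεκ
          have t2 : |A' i k j r| * |h k r - h' k r| ≤ Rσ * D :=
            mul_le_mul (hA' i k hkm j r) (ih (le_of_lt hkm) r) (abs_nonneg _) hR0
          linarith
        have hsum : |(∑ r, A i k j r * h k r) - ∑ r, A' i k j r * h' k r|
            ≤ (dims i k : ℝ) * (εκ + Rσ * D) := by
          rw [← Finset.sum_sub_distrib]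
          refine le_trans (Finset.abs_sum_le_sum_abs _ _) ?_
          have := Finset.sum_le_card_nsmul Finset.univ
            (fun r => |A i k j r * h k r - A' i k j r * h' k r|) (εκ + Rσ * D)
            (fun r _ => hterm r)
          simpa only [Finset.card_univ, Fintype.card_fin, nsmul_eq_mul] using this
        have hu : |h (k + 1) j - h' (k + 1) j| ≤ (Wσ : ℝ) * (εκ + Rσ * D) + εκ := by
          have e2 : h (k + 1) j = Real.tanh ((∑ r, A i k j r * h k r) + b i k j) := by
            simp only [hh, nnHidden]
          have e3 : h' (k + 1) j = Real.tanh ((∑ r, A' i k j r * h' k r) + b' i k j) := by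
            simp only [hh', nnHidden]
          rw [e2, e3]
          refine le_trans (tanh_lip _ _) ?_
          have e4 : (∑ r, A i k j r * h k r) + b i k j
              - ((∑ r, A' i k j r * h' k r) + b' i k j)
              = ((∑ r, A i k j r * h k r) - ∑ r, A' i k j r * h' k r)
                + (b i k j - b' i k j) := by ring
          rw [e4]
          refine le_trans (abs_add_le _ _) ?_
          have hb5 := hdb i k hkm j
          have h6 : (dims i k : ℝ) * (εκ + Rσ * D) ≤ (Wσ : ℝ) * (εκ + Rσ * D) :=
            mul_le_mul_of_nonneg_right hdims (by positivity)
          linarith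
        refine le_trans hu ?_
        have := nn_step_bound (Wσ : ℝ) Rσ εκ D k hW1 hR hεκ hD0 (le_of_eq hD)
        simpa using this
    -- output layer
    have hdm : (dims i m : ℝ) ≤ (Wσ : ℝ) := by exact_mod_cast hW i m (by omega)
    set o : Fin (dims i (m + 1)) := ⟨0, lt_of_lt_of_eq Nat.one_pos (hout i).symm⟩ with ho
    have eσ : σf i x = (∑ r, A i m o r * h m r) + b i m o := by
      rw [hσ i x]; rfl
    have eσ' : σf' i x = (∑ r, A' i m o r * h' m r) + b' i m o := by
      rw [hσ' i x]; rfl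
    have hmlt : m < m + 1 := Nat.lt_succ_self m
    have habs : ∀ (AA : ∀ ℓ : ℕ, Matrix (Fin (dims i (ℓ + 1))) (Fin (dims i ℓ)) ℝ)
        (bb : ∀ ℓ : ℕ, Fin (dims i (ℓ + 1)) → ℝ)
        (hh2 : (ℓ : ℕ) → Fin (dims i ℓ) → ℝ),
        (∀ r, |AA m o r| ≤ Rσ) → (|bb m o| ≤ Rσ) → (∀ r, |hh2 m r| ≤ 1) →
        |(∑ r, AA m o r * hh2 m r) + bb m o| ≤ S := by
      intro AA bb hh2 hA2 hb2 hh3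
      refine le_trans (abs_add_le _ _) ?_
      have hs1 : |∑ r, AA m o r * hh2 m r| ≤ (dims i m : ℝ) * Rσ := by
        refine le_trans (Finset.abs_sum_le_sum_abs _ _) ?_
        have := Finset.sum_le_card_nsmul Finset.univ
          (fun r => |AA m o r * hh2 m r|) Rσ (fun r _ => by
            show |AA m o r * hh2 m r| ≤ Rσ
            rw [abs_mul]
            calc |AA m o r| * |hh2 m r| ≤ Rσ * 1 :=
                  mul_le_mul (hA2 r) (hh3 r) (abs_nonneg _) hR0
              _ = Rσ := mul_one _)
        simpa only [Finset.card_univ, Fintype.card_fin, nsmul_eq_mul] using this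
      have h7 : (dims i m : ℝ) * Rσ ≤ (Wσ : ℝ) * Rσ := mul_le_mul_of_nonneg_right hdm hR0
      simp only [hS]
      linarith
    refine ⟨?_, ?_, ?_⟩
    · -- difference bound for the output layer
      rw [eσ, eσ']
      have hDm := hdiff m (by omega)
      set D : ℝ := (m : ℝ) * ((Wσ : ℝ) + 1) * (Rσ * (Wσ : ℝ)) ^ (m - 1) * εκ with hD
      have hD0 : 0 ≤ D := by positivity
      have hterm : ∀ r : Fin (dims i m),
          |A i m o r * h m r - A' i m o r * h' m r| ≤ εκ + Rσ * D := by
        intro r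
        have e1 : A i m o r * h m r - A' i m o r * h' m r
            = (A i m o r - A' i m o r) * h m r + A' i m o r * (h m r - h' m r) := by ring
        rw [e1]
        refine le_trans (abs_add_le _ _) ?_
        rw [abs_mul, abs_mul]
        have t1 : |A i m o r - A' i m o r| * |h m r| ≤ εκ * 1 :=
          mul_le_mul (hdA i m hmlt o r) (hbd m r).1 (abs_nonneg _) hεκ
        have t2 : |A' i m o r| * |h m r - h' m r| ≤ Rσ * D :=
          mul_le_mul (hA' i m hmlt o r) (hDm r) (abs_nonneg _) hR0
        linarith
      have hsum : |(∑ r, A i m o r * h m r) - ∑ r, A' i m o r * h' m r|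
          ≤ (dims i m : ℝ) * (εκ + Rσ * D) := by
        rw [← Finset.sum_sub_distrib]
        refine le_trans (Finset.abs_sum_le_sum_abs _ _) ?_
        have := Finset.sum_le_card_nsmul Finset.univ
          (fun r => |A i m o r * h m r - A' i m o r * h' m r|) (εκ + Rσ * D)
          (fun r _ => hterm r)
        simpa only [Finset.card_univ, Fintype.card_fin, nsmul_eq_mul] using this
      have e4 : (∑ r, A i m o r * h m r) + b i m o
          - ((∑ r, A' i m o r * h' m r) + b' i m o)
          = ((∑ r, A i m o r * h m r) - ∑ r, A' i m o r * h' m r)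
            + (b i m o - b' i m o) := by ring
      rw [e4]
      refine le_trans (abs_add_le _ _) ?_
      have hb5 := hdb i m hmlt o
      have h6 : (dims i m : ℝ) * (εκ + Rσ * D) ≤ (Wσ : ℝ) * (εκ + Rσ * D) :=
        mul_le_mul_of_nonneg_right hdm (by positivity)
      have hstep := nn_step_bound (Wσ : ℝ) Rσ εκ D m hW1 hR hεκ hD0 (le_of_eq hD)
      have hstep2 := nn_step_bound2 (Wσ : ℝ) Rσ εκ m hW1 hR hεκ
      rw [hδ]
      linarith
    · rw [eσ]
      exact habs (A i) (b i) h (fun r => hA i m hmlt o r) (hb i m hmlt o)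
        (fun r => (hbd m r).1)
    · rw [eσ']
      exact habs (A' i) (b' i) h' (fun r => hA' i m hmlt o r) (hb' i m hmlt o)
        (fun r => (hbd m r).2)
  -- bound on the sum of |g i|
  have hcz0 : 0 ≤ cz' := le_trans (Real.sqrt_nonneg _) (hgz x hx)
  have hgsum : ∑ i, |g i| ≤ Real.sqrt d * cz' := by
    have h1 : (∑ i, |g i|) ^ 2 ≤ (d : ℝ) * ∑ i, g i ^ 2 := by
      have := sq_sum_le_card_mul_sum_sq (s := (Finset.univ : Finset (Fin d)))
        (f := fun i : Fin d => |g i|)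
      simpa [sq_abs, Finset.card_univ] using this
    have h2 : ∑ i, |g i| ≤ Real.sqrt ((d : ℝ) * ∑ i, g i ^ 2) :=
      Real.le_sqrt_of_sq_le h1
    refine le_trans h2 ?_
    rw [Real.sqrt_mul (by positivity)]
    exact mul_le_mul_of_nonneg_left (hgz x hx) (Real.sqrt_nonneg _)
  -- main estimate
  have hmain : |(∑ i, (σf i x - q x * g i) ^ 2) - ∑ i, (σf' i x - q x * g i) ^ 2|
      ≤ ∑ i, δ * (2 * S + 2 * c₁ * |g i|) := by
    rw [← Finset.sum_sub_distrib]
    refine le_trans (Finset.abs_sum_le_sum_abs _ _) (Finset.sum_le_sum ?_)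
    intro i _
    obtain ⟨k1, k2, k3⟩ := key i
    have e1 : (σf i x - q x * g i) ^ 2 - (σf' i x - q x * g i) ^ 2
        = (σf i x - σf' i x) * (σf i x + σf' i x - 2 * (q x * g i)) := by ring
    rw [e1, abs_mul]
    have h5 : |σf i x + σf' i x - 2 * (q x * g i)| ≤ 2 * S + 2 * c₁ * |g i| := by
      have h7 : σf i x + σf' i x - 2 * (q x * g i)
          = σf i x + σf' i x + (-(2 * (q x * g i))) := by ring
      rw [h7]
      refine le_trans (abs_add_three _ _ _) ?_
      rw [abs_neg, abs_mul, abs_mul, abs_two]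
      have hq1 := hq x hx
      have hga := abs_nonneg (g i)
      nlinarith
    exact mul_le_mul k1 h5 (abs_nonneg _) hδ0
  refine le_trans hmain ?_
  have e8 : ∑ i, δ * (2 * S + 2 * c₁ * |g i|)
      = δ * (2 * S * d + 2 * c₁ * ∑ i, |g i|) := by
    rw [← Finset.mul_sum]
    congr 1
    rw [Finset.sum_add_distrib, Finset.sum_const, Finset.card_univ, Fintype.card_fin,
      ← Finset.mul_sum]
    push_cast
    ring
  rw [e8]
  have h9 : δ * (2 * S * d + 2 * c₁ * ∑ i, |g i|)
      ≤ δ * (2 * S * d + 2 * c₁ * (Real.sqrt d * cz')) := by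
    apply mul_le_mul_of_nonneg_left _ hδ0
    have h10 := mul_le_mul_of_nonneg_left hgsum (by linarith : (0:ℝ) ≤ 2 * c₁)
    linarith
  refine le_trans h9 ?_
  apply le_of_eq
  have hdd : Real.sqrt d * Real.sqrt d = (d : ℝ) := Real.mul_self_sqrt (by positivity)
  simp only [hδ, hS, Nat.add_sub_cancel, Nat.cast_add, Nat.cast_one]
  linear_combination (-(4 * ((m : ℝ) + 1) * Rσ ^ m * (Wσ : ℝ) ^ (m + 1) * εκ * Rσ
    * ((Wσ : ℝ) + 1))) * hdd
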